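/- arXiv:math/0006227 — 2 statements merged into one kernel-verified Lean document; each statement's English description precedes it below -/
import Mathlib

section
/- Let k ≥ 1 and let s be a nonzero complex number with s^{2m} ≠ 1 for all integers m with 1 ≤ m ≤ 2k+1. If α = s^{−2k} or α = −s^{−2k}, then Wenzl's quantum dimension of the single-row partition (2k+1) equals 1: ⟨(2k+1)⟩_{α,s} = 1. -/
open Finset

/-- Quantum integer `[m] = (s^m - s^{-m})/(s - s⁻¹)`. -/
noncomputable def qint (s : ℂ) (m : ℤ) : ℂ := (s ^ m - s ^ (-m)) / (s - s⁻¹)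

/-- Quantum integer `[m]_α = (α s^m - α⁻¹ s^{-m})/(s - s⁻¹)`. -/
noncomputable def qintA (α s : ℂ) (m : ℤ) : ℂ := (α * s ^ m - α⁻¹ * s ^ (-m)) / (s - s⁻¹)

/-- The cells `(i,j)` (row `i`, column `j`, both 1-based) of the Young diagram of
the partition `lam`, assuming all parts of index `> N` vanish. -/
def cells (lam : ℕ → ℕ) (N : ℕ) : Finset (ℕ × ℕ) :=
  (Finset.Icc 1 N ×ˢ Finset.Icc 1 (lam 1)).filter (fun p => p.2 ≤ lam p.1)

/-- Hook length `hl(i,j) = λ_i + λ^∨_j - i - j + 1`. -/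
def hookl (lam lamV : ℕ → ℕ) (p : ℕ × ℕ) : ℤ :=
  (lam p.1 : ℤ) + (lamV p.2 : ℤ) - p.1 - p.2 + 1

/-- `d_λ(i,j)`: equals `λ_i + λ_j - i - j + 1` if `i ≤ j`, and
`-λ^∨_i - λ^∨_j + i + j - 1` if `i > j`. -/
def dcell (lam lamV : ℕ → ℕ) (p : ℕ × ℕ) : ℤ :=
  if p.1 ≤ p.2 then (lam p.1 : ℤ) + (lam p.2 : ℤ) - p.1 - p.2 + 1
  else -(lamV p.1 : ℤ) - (lamV p.2 : ℤ) + p.1 + p.2 - 1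

/-- `d'_λ(i,j)`: equals `λ_i + λ_j - i - j + 1` if `i < j`, and
`-λ^∨_i - λ^∨_j + i + j - 1` if `i ≥ j`. -/
def dcell' (lam lamV : ℕ → ℕ) (p : ℕ × ℕ) : ℤ :=
  if p.1 < p.2 then (lam p.1 : ℤ) + (lam p.2 : ℤ) - p.1 - p.2 + 1
  else -(lamV p.1 : ℤ) - (lamV p.2 : ℤ) + p.1 + p.2 - 1

/-- Wenzl's quantum dimension
`⟨λ⟩_{α,s} = ∏_{(j,j)∈λ} ([λ_j - λ^∨_j]_α + [hl(j,j)])/[hl(j,j)] ·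
∏_{(i,j)∈λ, i≠j} [d_λ(i,j)]_α/[hl(i,j)]`. -/
noncomputable def wenzl (α s : ℂ) (lam lamV : ℕ → ℕ) (N : ℕ) : ℂ :=
  (∏ p ∈ (cells lam N).filter (fun p => p.1 = p.2),
      (qintA α s ((lam p.1 : ℤ) - (lamV p.1 : ℤ)) + qint s (hookl lam lamV p)) /
        qint s (hookl lam lamV p)) *
  ∏ p ∈ (cells lam N).filter (fun p => p.1 ≠ p.2),
      qintA α s (dcell lam lamV p) / qint s (hookl lam lamV p)


/-- The single-column partition `1^j` (j parts equal to 1), as a 1-based part function. -/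
def colPart (j : ℕ) : ℕ → ℕ := fun i => if 1 ≤ i ∧ i ≤ j then 1 else 0

/-- The single-row partition `(j)`, as a 1-based part function. -/
def rowPart (j : ℕ) : ℕ → ℕ := fun i => if i = 1 then j else 0

/-! For `α = ±s^{-2k}` one has `[m]_α = ±[m - 2k]`. Hence the diagonal cell of the row
`(2k+1)` contributes `([0] + [2k+1]) / [2k+1] = 1`, and the cell `(1, j)` contributes
`∓[j - 1] / [2k + 2 - j]`. Over `j = 2, …, 2k+1` the numerators are the denominators in reverse
order, and there is an even number of signs. -/

lemma qint_zero (s : ℂ) : qint s 0 = 0 := by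
  simp [qint]

lemma qint_neg (s : ℂ) (m : ℤ) : qint s (-m) = -qint s m := by
  rw [qint, qint, neg_neg, ← neg_sub, neg_div]

lemma zpow_natCast_sub_zpow_neg_ne_zero {s : ℂ} (hs : s ≠ 0) {m : ℕ} (hm : s ^ (2 * m) ≠ 1) :
    s ^ (m : ℤ) - s ^ (-(m : ℤ)) ≠ 0 := by
  intro h
  apply hm
  calc s ^ (2 * m) = s ^ (m : ℤ) * s ^ (m : ℤ) := by rw [← zpow_add₀ hs]; norm_cast; ring_nf
    _ = s ^ (m : ℤ) * s ^ (-(m : ℤ)) := by rw [sub_eq_zero.mp h]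
    _ = 1 := by rw [← zpow_add₀ hs, add_neg_cancel, zpow_zero]

lemma qint_natCast_ne_zero {s : ℂ} (hs : s ≠ 0) (h1 : s ^ 2 ≠ 1) {m : ℕ} (hm : s ^ (2 * m) ≠ 1) :
    qint s m ≠ 0 := by
  have hden := zpow_natCast_sub_zpow_neg_ne_zero hs (m := 1) h1
  rw [Nat.cast_one, zpow_one, zpow_neg_one] at hden
  exact div_ne_zero (zpow_natCast_sub_zpow_neg_ne_zero hs hm) hden

lemma qintA_mul_zpow {s : ℂ} (hs : s ≠ 0) {ε : ℂ} (hε : ε ^ 2 = 1) (t m : ℤ) :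
    qintA (ε * s ^ t) s m = ε * qint s (m + t) := by
  have hε_inv : ε⁻¹ = ε := inv_eq_of_mul_eq_one_right (by rw [← sq, hε])
  rw [qintA, qint, mul_inv, hε_inv, ← zpow_neg, mul_assoc, mul_assoc, ← zpow_add₀ hs,
    ← zpow_add₀ hs, ← mul_sub, mul_div_assoc, ← neg_add, add_comm t m]

lemma prod_Icc_natCast_reflect {M : Type*} [CommMonoid M] (f : ℤ → M) (a b : ℕ) :
    ∏ j ∈ Icc a b, f ((a : ℤ) + b - j) = ∏ j ∈ Icc a b, f j := by
  refine prod_nbij' (fun j => a + b - j) (fun j => a + b - j) ?_ ?_ ?_ ?_ ?_ <;>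
    intro j hj <;> simp only [mem_Icc] at hj ⊢
  · omega
  · omega
  · omega
  · omega
  · congr 1; omega

lemma cells_rowPart (n : ℕ) : cells (rowPart n) 1 = {1} ×ˢ Icc 1 n := by
  ext ⟨i, j⟩
  simp only [cells, rowPart, mem_filter, mem_product, mem_Icc, mem_singleton]
  split_ifs <;> omega

lemma wenzl_rowPart (α s : ℂ) {n : ℕ} (hn : 1 ≤ n) :
    wenzl α s (rowPart n) (colPart n) 1 =
      (qintA α s ((n : ℤ) - 1) + qint s n) / qint s n *
        ∏ j ∈ Icc 2 n, qintA α s ((n : ℤ) - j) / qint s ((n : ℤ) + 1 - j) := by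
  have hdiag : (cells (rowPart n) 1).filter (fun p => p.1 = p.2) = {(1, 1)} := by
    ext ⟨i, j⟩
    simp only [cells_rowPart, mem_filter, mem_product, mem_Icc, mem_singleton, Prod.mk.injEq]
    omega
  have hoff : (cells (rowPart n) 1).filter (fun p => p.1 ≠ p.2) = {1} ×ˢ Icc 2 n := by
    ext ⟨i, j⟩
    simp only [cells_rowPart, mem_filter, mem_product, mem_Icc, mem_singleton, ne_eq]
    omega
  have hcol : ∀ j, 1 ≤ j → j ≤ n → colPart n j = 1 := fun j h₁ h₂ => if_pos ⟨h₁, h₂⟩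
  rw [wenzl, hdiag, hoff, prod_singleton, prod_product, prod_singleton]
  congr 1
  · simp only [hookl, rowPart, if_true, hcol 1 le_rfl hn]
    push_cast
    ring_nf
  · refine prod_congr rfl fun j hj => ?_
    rw [mem_Icc] at hj
    simp only [hookl, dcell, rowPart, if_true, if_neg (show j ≠ 1 by omega),
      hcol j (by omega) hj.2]
    rw [if_pos (by omega)]
    push_cast
    ring_nf

lemma wenzl_rowPart_of_eq_mul_zpow {s : ℂ} (hs : s ≠ 0) {ε : ℂ} (hε : ε ^ 2 = 1) {n : ℕ}
    (hn : 1 ≤ n) (hq : ∀ m : ℕ, 1 ≤ m → m ≤ n → qint s m ≠ 0) :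
    wenzl (ε * s ^ (1 - (n : ℤ))) s (rowPart n) (colPart n) 1 = (-ε) ^ (n - 1) := by
  have hfactor : ∀ j ∈ Icc 2 n,
      qintA (ε * s ^ (1 - (n : ℤ))) s ((n : ℤ) - j) / qint s ((n : ℤ) + 1 - j) =
        -ε * (qint s ((j : ℤ) - 1) / qint s ((n : ℤ) + 1 - j)) := by
    intro j _
    rw [qintA_mul_zpow hs hε, show (n : ℤ) - j + (1 - n) = -((j : ℤ) - 1) by ring, qint_neg]
    ring
  have hden : ∏ j ∈ Icc 2 n, qint s ((n : ℤ) + 1 - j) ≠ 0 := by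
    refine prod_ne_zero_iff.mpr fun j hj => ?_
    rw [mem_Icc] at hj
    rw [show (n : ℤ) + 1 - j = ((n + 1 - j : ℕ) : ℤ) by omega]
    exact hq _ (by omega) (by omega)
  have hreflect :
      ∏ j ∈ Icc 2 n, qint s ((j : ℤ) - 1) = ∏ j ∈ Icc 2 n, qint s ((n : ℤ) + 1 - j) := by
    rw [← prod_Icc_natCast_reflect (fun x => qint s (x - 1))]
    simp only [Nat.cast_ofNat]
    ring_nf
  rw [wenzl_rowPart _ _ hn, qintA_mul_zpow hs hε, show (n : ℤ) - 1 + (1 - n) = 0 by ring,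
    qint_zero, mul_zero, zero_add, div_self (hq n hn le_rfl), one_mul, prod_congr rfl hfactor,
    prod_mul_distrib, prod_const, Nat.card_Icc, prod_div_distrib, hreflect, div_self hden,
    mul_one, show n + 1 - 2 = n - 1 by omega]

theorem wenzl_row_B_general (k : ℕ) (s : ℂ) (hs : s ≠ 0)
    (hroot : ∀ m : ℕ, 1 ≤ m → m ≤ 2 * k + 1 → s ^ (2 * m) ≠ 1)
    (α : ℂ) (hα : α = s ^ (-(2 * (k : ℤ))) ∨ α = -s ^ (-(2 * (k : ℤ)))) :
    wenzl α s (rowPart (2 * k + 1)) (colPart (2 * k + 1)) 1 = 1 := by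
  obtain ⟨ε, hε, rfl⟩ : ∃ ε : ℂ, ε ^ 2 = 1 ∧ α = ε * s ^ (1 - ((2 * k + 1 : ℕ) : ℤ)) := by
    rw [show 1 - ((2 * k + 1 : ℕ) : ℤ) = -(2 * (k : ℤ)) by push_cast; ring]
    rcases hα with rfl | rfl
    · exact ⟨1, one_pow 2, (one_mul _).symm⟩
    · exact ⟨-1, by norm_num, (neg_one_mul _).symm⟩
  have hq : ∀ m : ℕ, 1 ≤ m → m ≤ 2 * k + 1 → qint s m ≠ 0 := fun m hm₁ hm₂ =>
    qint_natCast_ne_zero hs (by simpa using hroot 1 le_rfl (by omega)) (hroot m hm₁ hm₂)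
  rw [wenzl_rowPart_of_eq_mul_zpow hs hε (by omega) hq, Nat.add_sub_cancel, pow_mul, neg_sq, hε,
    one_pow]

/-- For `α = s^{-2k}` or `α = -s^{-2k}`, the quantum dimension
of the single row `(2k+1)` equals `1`. -/
theorem wenzl_row_B (k : ℕ) (hk : 1 ≤ k) (s : ℂ) (hs : s ≠ 0)
    (hroot : ∀ m : ℕ, 1 ≤ m → m ≤ 2 * k + 1 → s ^ (2 * m) ≠ 1)
    (α : ℂ) (hα : α = s ^ (-(2 * (k : ℤ))) ∨ α = -s ^ (-(2 * (k : ℤ)))) :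
    wenzl α s (rowPart (2 * k + 1)) (colPart (2 * k + 1)) 1 = 1 :=
  wenzl_row_B_general k s hs hroot α hα
end

section
/- Let n, k ≥ 1, set l = 2n+2k+1, let s ∈ ℂ be a primitive 2l-th root of unity, and let g ≥ 1 be an integer. For a partition λ = (λ_1,…,λ_n) with at most n parts define Q(λ) = (−1)^{|λ|} ∏_{j=1}^{n} [2n+2+2λ_j−2j]_s/[2n+2−2j]_s · ∏_{1≤i<j≤n} [2n+2+λ_i−i+λ_j−j]_s·[λ_i−i−λ_j+j]_s / ([2n+2−i−j]_s·[j−i]_s), where [m]_s = s^m − s^{−m}. Let Γ = {partitions λ with λ_1 ≤ k and at most n parts}. Then (∑_{λ∈Γ} Q(λ)²)^{g−1} · ∑_{λ∈Γ} Q(λ)^{2(1−g)} = (−(2n+2k+1))^{n(g−1)} · ∑_{n+k ≥ l_1 > l_2 > … > l_n > 0} ( ∏_{j=1}^{n} [2l_j]_s · ∏_{1≤i<j≤n} [l_i+l_j]_s·[l_i−l_j]_s )^{2(1−g)}, where the sum on the right runs over all strictly decreasing n-tuples of integers (l_1,…,l_n) with n+k ≥ l_1 and l_n > 0, and negative integer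 powers denote inverses in ℂ. -/
/-!
Put `l = λ + ρ`, i.e. `l_j = λ_j + n + 1 - j`. Then `Q(λ) = ± P(l) / P(ρ)`, where `P` is the
product on the right-hand side, and `λ ↦ λ + ρ` maps `Γ` bijectively onto the strictly decreasing
tuples `n + k ≥ l_1 > ⋯ > l_n > 0`; so both sides reduce to `∑_l P(l)² = (-(2n+2k+1))ⁿ`.

By the Weyl denominator formula of type `C` (a Vandermonde determinant in the variables
`s^{2l} + s^{-2l}`, reached through Chebyshev polynomials), `P(l) = ± det ([2 l_i j]_s)`.
Since `s²` is a primitive `(2n+2k+1)`-th root of unity, the functions `m ↦ [2mj]_s`, `1 ≤ j ≤ n`,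
are orthogonal on `{1, …, n+k}` with squared norm `-(2n+2k+1)`. Expanding both determinants,
the sum of `det²` over all of `{1, …, n+k}ⁿ` is `n! (-(2n+2k+1))ⁿ`; non-injective tuples
contribute `0` and each strictly decreasing tuple is counted `n!` times.
-/

open Finset

/-- `[m]_s = s^m - s^{-m}`. -/
noncomputable def br (s : ℂ) (m : ℤ) : ℂ := s ^ m - s ^ (-m)

/-- The quantum dimension `Q(λ)` of the simple object of `C^{n,k}` labelled by the
partition `λ = (λ_1,…,λ_n)` (here `f : Fin n → ℕ` with `f j = λ_{j+1}`):
`Q(λ) = (-1)^{|λ|} ∏_{j=1}^n [2n+2+2λ_j-2j]/[2n+2-2j] ·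
∏_{1≤i<j≤n} [2n+2+λ_i-i+λ_j-j]·[λ_i-i-λ_j+j] / ([2n+2-i-j]·[j-i])`. -/
noncomputable def Qdim (s : ℂ) (n : ℕ) (f : Fin n → ℕ) : ℂ :=
  (-1 : ℂ) ^ (∑ j, f j) *
  (∏ j : Fin n,
    br s (2 * n + 2 + 2 * (f j : ℤ) - 2 * ((j : ℕ) + 1)) /
      br s (2 * n + 2 - 2 * (((j : ℕ) : ℤ) + 1))) *
  ∏ p ∈ (Finset.univ ×ˢ Finset.univ : Finset (Fin n × Fin n)).filter (fun p => p.1 < p.2),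
    br s (2 * n + 2 + (f p.1 : ℤ) - ((p.1 : ℕ) + 1) + (f p.2 : ℤ) - ((p.2 : ℕ) + 1)) *
      br s ((f p.1 : ℤ) - ((p.1 : ℕ) + 1) - (f p.2 : ℤ) + ((p.2 : ℕ) + 1)) /
    (br s (2 * n + 2 - (((p.1 : ℕ) : ℤ) + 1) - (((p.2 : ℕ) : ℤ) + 1)) *
      br s ((((p.2 : ℕ) : ℤ) + 1) - (((p.1 : ℕ) : ℤ) + 1)))

/-- The labelling set `Γ = Γ(C^{n,k})`: partitions with at most `n` parts, each `≤ k`. -/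
noncomputable def GammaC (n k : ℕ) : Finset (Fin n → ℕ) :=
  (Finset.Icc 0 (fun _ => k)).filter (fun f => ∀ i j : Fin n, i ≤ j → f j ≤ f i)

/-- The index set of strictly decreasing tuples `n+k ≥ l_1 > l_2 > … > l_n > 0`
(with `t j = l_{j+1}`). -/
noncomputable def Tuples (n k : ℕ) : Finset (Fin n → ℕ) :=
  (Finset.Icc 0 (fun _ => n + k)).filter
    (fun t => (∀ i j : Fin n, i < j → t j < t i) ∧ ∀ i, 0 < t i)

/-- `∏_{j=1}^n [2l_j]_s · ∏_{1≤i<j≤n} [l_i+l_j]_s [l_i-l_j]_s`. -/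
noncomputable def Pprod (s : ℂ) (n : ℕ) (t : Fin n → ℕ) : ℂ :=
  (∏ j : Fin n, br s (2 * (t j : ℤ))) *
  ∏ p ∈ (Finset.univ ×ˢ Finset.univ : Finset (Fin n × Fin n)).filter (fun p => p.1 < p.2),
    br s ((t p.1 : ℤ) + (t p.2 : ℤ)) * br s ((t p.1 : ℤ) - (t p.2 : ℤ))

theorem Fin.strictAnti_iff_antitone_add_val {n : ℕ} (t : Fin n → ℕ) :
    StrictAnti t ↔ Antitone fun j => t j + j := by
  cases n with
  | zero => exact ⟨fun _ i => i.elim0, fun _ i => i.elim0⟩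
  | succ n =>
    rw [Fin.strictAnti_iff_succ_lt, Fin.antitone_iff_succ_le]
    refine forall_congr' fun i => ?_
    simp only [Fin.val_succ, Fin.val_castSucc]
    omega

theorem prod_filter_lt_eq_prod_Ioi {M : Type*} [CommMonoid M] {n : ℕ} (h : Fin n × Fin n → M) :
    ∏ p ∈ (univ ×ˢ univ : Finset (Fin n × Fin n)).filter (fun p => p.1 < p.2), h p
      = ∏ i : Fin n, ∏ j ∈ Ioi i, h (i, j) := by
  rw [prod_filter, prod_product]
  refine prod_congr rfl fun i _ => ?_
  rw [prod_ite, prod_const_one, mul_one]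
  exact prod_congr (by ext; simp) fun _ _ => rfl

theorem sum_Icc_one_eq_sum_range {M : Type*} [AddCommMonoid M] (f : ℕ → M) (N : ℕ) :
    ∑ m ∈ Icc 1 N, f m = ∑ i ∈ range N, f (i + 1) := by
  rw [range_eq_Ico, sum_Ico_add' f 0 N 1]
  rfl

theorem geom_sum_eq_ite_of_pow_eq_one {K : Type*} [Field K] [DecidableEq K] {x : K} {L : ℕ}
    (hx : x ^ L = 1) : ∑ i ∈ range L, x ^ i = if x = 1 then (L : K) else 0 := by
  split_ifs with h
  · simp [h]
  · rw [geom_sum_eq h, hx, sub_self, zero_div]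

theorem one_add_sum_pow_add_inv_pow {K : Type*} [Field K] {x : K} {N : ℕ}
    (hx : x ^ (2 * N + 1) = 1) :
    1 + ∑ m ∈ Icc 1 N, (x ^ m + x⁻¹ ^ m) = ∑ i ∈ range (2 * N + 1), x ^ i := by
  have hreflect : ∑ i ∈ range N, x⁻¹ ^ (i + 1) = ∑ i ∈ range N, x ^ (N + 1 + i) := by
    rw [← sum_range_reflect (fun i => x ^ (N + 1 + i)) N]
    refine sum_congr rfl fun i hi => ?_
    have hi := mem_range.mp hi
    rw [inv_pow]
    refine inv_eq_of_mul_eq_one_left ?_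
    rw [← pow_add, ← hx]
    congr 1
    omega
  rw [sum_Icc_one_eq_sum_range, sum_add_distrib, hreflect, show 2 * N + 1 = (N + 1) + N by ring,
    sum_range_add, sum_range_succ']
  ring

theorem IsPrimitiveRoot.zpow_two_mul_eq_one_iff {G : Type*} [DivisionCommMonoid G] {ζ : G}
    {L : ℕ} (hζ : IsPrimitiveRoot ζ (2 * L)) (c : ℤ) : ζ ^ (2 * c) = 1 ↔ (L : ℤ) ∣ c := by
  rw [hζ.zpow_eq_one_iff_dvd, Nat.cast_mul, Nat.cast_two]
  exact mul_dvd_mul_iff_left two_ne_zero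

section
variable {n : ℕ} {α R : Type*}

theorem sum_det_sq_of_orthogonal [CommRing R] (S : Finset α) (φ : Fin n → α → R) (c : R)
    (horth : ∀ a b, ∑ x ∈ S, φ a x * φ b x = if a = b then c else 0) :
    ∑ t ∈ Fintype.piFinset (fun _ => S), (Matrix.of fun i j => φ j (t i)).det ^ 2
      = n.factorial * c ^ n := by
  have hdet : ∀ t : Fin n → α, (Matrix.of fun i j => φ j (t i)).det
      = ∑ σ : Equiv.Perm (Fin n), (Equiv.Perm.sign σ : R) * ∏ i, φ (σ i) (t i) := by
    intro t
    rw [← Matrix.det_transpose, Matrix.det_apply']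
    rfl
  have hprod : ∀ σ τ : Equiv.Perm (Fin n),
      ∑ t ∈ Fintype.piFinset (fun _ => S), ∏ i, φ (σ i) (t i) * φ (τ i) (t i)
        = if σ = τ then c ^ n else 0 := by
    intro σ τ
    rw [← Finset.prod_univ_sum (fun _ => S) (fun i x => φ (σ i) x * φ (τ i) x)]
    simp_rw [horth, Fintype.prod_ite_zero, Finset.prod_const, card_univ,
      Fintype.card_fin, ← Equiv.ext_iff]
  calc ∑ t ∈ Fintype.piFinset (fun _ => S), (Matrix.of fun i j => φ j (t i)).det ^ 2
      = ∑ σ : Equiv.Perm (Fin n), ∑ τ : Equiv.Perm (Fin n),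
          (Equiv.Perm.sign σ : R) * (Equiv.Perm.sign τ : R) *
            ∑ t ∈ Fintype.piFinset (fun _ => S), ∏ i, φ (σ i) (t i) * φ (τ i) (t i) := by
        simp_rw [hdet, sq, sum_mul_sum, mul_sum]
        rw [sum_comm]
        refine sum_congr rfl fun σ _ => ?_
        rw [sum_comm]
        refine sum_congr rfl fun τ _ => sum_congr rfl fun t _ => ?_
        rw [prod_mul_distrib]; ring
    _ = ∑ σ : Equiv.Perm (Fin n), c ^ n := by
        refine sum_congr rfl fun σ _ => ?_
        simp_rw [hprod, mul_ite, mul_zero, sum_ite_eq, if_pos (mem_univ _)]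
        rw [← Int.cast_mul, ← Units.val_mul, Int.units_mul_self, Units.val_one, Int.cast_one,
          one_mul]
    _ = n.factorial * c ^ n := by
        rw [sum_const, card_univ, Fintype.card_perm, Fintype.card_fin, nsmul_eq_mul]

theorem sum_piFinset_eq_factorial_mul_sum_strictAnti [LinearOrder α] [AddCommMonoid R]
    (S : Finset α) (F : (Fin n → α) → R)
    (hperm : ∀ t (σ : Equiv.Perm (Fin n)), F (t ∘ σ) = F t)
    (hinj : ∀ t, ¬ Function.Injective t → F t = 0) :
    ∑ t ∈ Fintype.piFinset (fun _ => S), F t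
      = n.factorial • ∑ t ∈ (Fintype.piFinset fun _ => S).filter StrictAnti, F t := by
  classical
  set A : Finset (Fin n → α) := (Fintype.piFinset fun _ => S).filter StrictAnti
  have hreindex : ∑ p ∈ A ×ˢ (univ : Finset (Equiv.Perm (Fin n))), F (p.1 ∘ p.2)
      = ∑ t ∈ (Fintype.piFinset fun _ => S).filter Function.Injective, F t := by
    refine sum_bij (fun p _ => p.1 ∘ p.2) ?_ ?_ ?_ fun _ _ => rfl
    · rintro ⟨u, σ⟩ hp
      obtain ⟨hu, hanti⟩ := mem_filter.mp (mem_product.mp hp).1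
      exact mem_filter.mpr ⟨Fintype.mem_piFinset.mpr fun i => Fintype.mem_piFinset.mp hu (σ i),
        hanti.injective.comp σ.injective⟩
    · rintro ⟨u, σ⟩ hp ⟨u', σ'⟩ hp' h
      have hu := (mem_filter.mp (mem_product.mp hp).1).2
      have hu' := (mem_filter.mp (mem_product.mp hp').1).2
      have huu' : u = u' := by
        have hu_eq : u = u' ∘ ⇑(σ' * σ⁻¹) := by
          funext x; simpa using congrFun h (σ⁻¹ x)
        have huniq := Tuple.unique_antitone (σ := σ' * σ⁻¹) (τ := 1)
          (hu_eq ▸ hu.antitone) hu'.antitone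
        rwa [Equiv.Perm.coe_one, Function.comp_id, ← hu_eq] at huniq
      subst huu'
      refine Prod.ext rfl (Equiv.ext fun x => hu.injective (congrFun h x))
    · intro t ht
      obtain ⟨hbox, htinj⟩ := mem_filter.mp ht
      set π := Fin.revPerm.trans (Tuple.sort t)
      have hanti : StrictAnti (t ∘ π) :=
        ((Tuple.monotone_sort t).comp_antitone Fin.rev_anti).strictAnti_of_injective
          (htinj.comp π.injective)
      refine ⟨(t ∘ π, π⁻¹), mem_product.mpr ⟨mem_filter.mpr ⟨?_, hanti⟩, mem_univ _⟩, ?_⟩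
      · exact Fintype.mem_piFinset.mpr fun i => Fintype.mem_piFinset.mp hbox (π i)
      · funext x; simp
  rw [← sum_filter_of_ne fun t _ h => not_not.mp (mt (hinj t) h), ← hreindex, sum_product,
    smul_sum]
  refine sum_congr rfl fun u _ => ?_
  simp [hperm, Fintype.card_perm]

end

namespace Polynomial.Chebyshev

variable {R : Type*} [CommRing R]

theorem S_natCast_add_two (n : ℕ) : S R (n + 2 : ℕ) = X * S R (n + 1 : ℕ) - S R n := by
  push_cast
  exact S_add_two R n

theorem monic_S_natCast_and_natDegree [Nontrivial R] (n : ℕ) :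
    (S R n).Monic ∧ (S R n).natDegree = n := by
  induction n using Nat.twoStepInduction with
  | zero => simp
  | one => simp
  | more n ih1 ih2 =>
    have hX : (X * S R (n + 1 : ℕ)).Monic := monic_X.mul ih2.1
    have hXdeg : (X * S R (n + 1 : ℕ)).natDegree = n + 2 := by
      rw [monic_X.natDegree_mul ih2.1, natDegree_X, ih2.2]; ring
    have hlt : (S R n).natDegree < (X * S R (n + 1 : ℕ)).natDegree := by omega
    rw [S_natCast_add_two, natDegree_sub_eq_left_of_natDegree_lt hlt, hXdeg]
    exact ⟨hX.sub_of_left (degree_lt_degree hlt), rfl⟩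

theorem sub_mul_S_eval_add_inv {x y : R} (h : x * y = 1) (n : ℕ) :
    (x - y) * (S R n).eval (x + y) = x ^ (n + 1) - y ^ (n + 1) := by
  induction n using Nat.twoStepInduction with
  | zero => simp
  | one => simp; ring
  | more n ih1 ih2 =>
    rw [S_natCast_add_two, eval_sub, eval_mul, eval_X]
    linear_combination (x + y) * ih2 - ih1 + (x ^ (n + 1) - y ^ (n + 1)) * h

end Polynomial.Chebyshev

open Polynomial.Chebyshev in
theorem Matrix.det_pow_sub_inv_pow {K : Type*} [Field K] {n : ℕ} (w : Fin n → K)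
    (hw : ∀ i, w i ≠ 0) :
    (Matrix.of fun i j : Fin n => w i ^ ((j : ℕ) + 1) - (w i)⁻¹ ^ ((j : ℕ) + 1)).det
      = (∏ i, (w i - (w i)⁻¹)) *
        ∏ i : Fin n, ∏ j ∈ Ioi i, ((w j + (w j)⁻¹) - (w i + (w i)⁻¹)) := by
  set A := Matrix.of fun i j : Fin n => (S K (j : ℕ)).eval (w i + (w i)⁻¹)
  have hcol : (Matrix.of fun i j : Fin n => w i ^ ((j : ℕ) + 1) - (w i)⁻¹ ^ ((j : ℕ) + 1))
      = Matrix.of fun i j => (w i - (w i)⁻¹) * A i j := by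
    ext i j
    exact (sub_mul_S_eval_add_inv (mul_inv_cancel₀ (hw i)) j).symm
  rw [hcol, Matrix.det_mul_column, ← Matrix.det_vandermonde,
    Matrix.det_eval_matrixOfPolynomials_eq_det_vandermonde _ _
      (fun j => (monic_S_natCast_and_natDegree (j : ℕ)).2)
      (fun j => (monic_S_natCast_and_natDegree (j : ℕ)).1)]

section
variable {s : ℂ}

theorem br_add_mul_br_sub (hs : s ≠ 0) (a b : ℤ) :
    br s (a + b) * br s (a - b)
      = (s ^ (2 * a) + s ^ (-(2 * a))) - (s ^ (2 * b) + s ^ (-(2 * b))) := by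
  simp only [br, neg_add, neg_sub, mul_comm (2 : ℤ), zpow_add₀ hs, zpow_sub₀ hs, zpow_mul,
    zpow_neg]
  field_simp
  ring

theorem br_ne_zero {L : ℕ} (hs : IsPrimitiveRoot s (2 * L)) {m : ℤ} (h0 : 0 < m) (hL : m < L) :
    br s m ≠ 0 := by
  have hs0 : s ≠ 0 := hs.ne_zero (by omega)
  rw [br, sub_ne_zero, Ne, ← mul_right_inj' (zpow_ne_zero m hs0), ← zpow_add₀ hs0,
    ← zpow_add₀ hs0, add_neg_cancel, zpow_zero, ← two_mul, hs.zpow_two_mul_eq_one_iff]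
  exact fun h => (Int.le_of_dvd h0 h).not_gt hL

theorem sum_br_mul_br {N : ℕ} (hs : IsPrimitiveRoot s (2 * (2 * N + 1))) {a b : ℕ}
    (ha : a < N) (hb : b < N) :
    ∑ m ∈ Icc 1 N, br s (2 * (m : ℤ) * (a + 1)) * br s (2 * (m : ℤ) * (b + 1))
      = if a = b then -((2 * N + 1 : ℕ) : ℂ) else 0 := by
  classical
  have hs0 : s ≠ 0 := hs.ne_zero (by omega)
  have hpow : ∀ c : ℤ, (s ^ (2 * c)) ^ (2 * N + 1) = 1 := fun c => by
    rw [← zpow_natCast, ← zpow_mul, hs.zpow_eq_one_iff_dvd]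
    exact ⟨c, by push_cast; ring⟩
  have hterm : ∀ m : ℕ, br s (2 * (m : ℤ) * (a + 1)) * br s (2 * (m : ℤ) * (b + 1))
      = ((s ^ (2 * ((a : ℤ) + b + 2))) ^ m + (s ^ (2 * ((a : ℤ) + b + 2)))⁻¹ ^ m)
        - ((s ^ (2 * ((a : ℤ) - b))) ^ m + (s ^ (2 * ((a : ℤ) - b)))⁻¹ ^ m) := fun m => by
    rw [show 2 * (m : ℤ) * (a + 1) = m * (a + b + 2) + m * (a - b) by ring,
      show 2 * (m : ℤ) * (b + 1) = m * (a + b + 2) - m * (a - b) by ring,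
      br_add_mul_br_sub hs0]
    simp only [← zpow_natCast, ← zpow_neg, ← zpow_mul]
    ring_nf
  have hsum : ∀ c : ℤ, ∑ m ∈ Icc 1 N, ((s ^ (2 * c)) ^ m + (s ^ (2 * c))⁻¹ ^ m)
      = (if ((2 * N + 1 : ℕ) : ℤ) ∣ c then ((2 * N + 1 : ℕ) : ℂ) else 0) - 1 := fun c => by
    rw [eq_sub_iff_add_eq', one_add_sum_pow_add_inv_pow (hpow c),
      geom_sum_eq_ite_of_pow_eq_one (hpow c)]
    simp only [hs.zpow_two_mul_eq_one_iff]
  have hab : ¬ ((2 * N + 1 : ℕ) : ℤ) ∣ (a + b + 2) := fun h =>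
    (Int.le_of_dvd (by omega) h).not_gt (by push_cast; omega)
  have hab' : ((2 * N + 1 : ℕ) : ℤ) ∣ (a - b) ↔ a = b := by
    refine ⟨fun h => ?_, fun h => by simp [h]⟩
    have := Int.eq_zero_of_abs_lt_dvd h (by rw [abs_lt]; push_cast; omega)
    omega
  simp only [hterm, sum_sub_distrib, hsum, if_neg hab, hab']
  split_ifs <;> ring

end

section
variable {n k : ℕ} {s : ℂ}

noncomputable def weylMatrix (s : ℂ) (t : Fin n → ℕ) : Matrix (Fin n) (Fin n) ℂ :=
  Matrix.of fun i j => br s (2 * (t i : ℤ) * ((j : ℕ) + 1))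

theorem Pprod_sq_eq_det_sq (hs : s ≠ 0) (t : Fin n → ℕ) :
    Pprod s n t ^ 2 = (weylMatrix s t).det ^ 2 := by
  set w : Fin n → ℂ := fun i => s ^ (2 * (t i : ℤ))
  have hw : ∀ i, w i ≠ 0 := fun i => zpow_ne_zero _ hs
  have hbr : ∀ i (c : ℕ), br s (2 * (t i : ℤ) * c) = w i ^ c - (w i)⁻¹ ^ c := fun i c => by
    simp only [w, br, ← zpow_natCast, ← zpow_mul, inv_zpow', mul_neg]
  have hpair : ∀ i j, br s ((t i : ℤ) + t j) * br s ((t i : ℤ) - t j)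
      = -((w j + (w j)⁻¹) - (w i + (w i)⁻¹)) := fun i j => by
    rw [br_add_mul_br_sub hs]
    simp only [w, zpow_neg]
    ring
  have hdet : Pprod s n t = (∏ _p ∈ (univ ×ˢ univ : Finset (Fin n × Fin n)).filter
      (fun p => p.1 < p.2), (-1 : ℂ)) * (weylMatrix s t).det := by
    have hW : weylMatrix s t = Matrix.of fun i j : Fin n =>
        w i ^ ((j : ℕ) + 1) - (w i)⁻¹ ^ ((j : ℕ) + 1) := by
      ext i j
      exact_mod_cast hbr i ((j : ℕ) + 1)
    rw [hW, Matrix.det_pow_sub_inv_pow w hw, Pprod]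
    have hdiag : ∀ j, br s (2 * (t j : ℤ)) = w j - (w j)⁻¹ := fun j => by simpa using hbr j 1
    simp only [hdiag, hpair, prod_filter_lt_eq_prod_Ioi, neg_eq_neg_one_mul (_ - _),
      prod_mul_distrib]
    ring
  rw [hdet, mul_pow, ← prod_pow]
  simp

theorem Tuples_eq_filter_strictAnti :
    Tuples n k = (Fintype.piFinset fun _ => Icc 1 (n + k)).filter StrictAnti := by
  ext t
  simp only [Tuples, mem_filter, mem_Icc, Fintype.mem_piFinset, Pi.le_def, StrictAnti]
  constructor
  · rintro ⟨⟨-, hle⟩, hanti, hpos⟩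
    exact ⟨fun i => ⟨hpos i, hle i⟩, hanti⟩
  · rintro ⟨hbox, hanti⟩
    exact ⟨⟨fun _ => Nat.zero_le _, fun i => (hbox i).2⟩, hanti, fun i => (hbox i).1⟩

theorem det_weylMatrix_comp_perm_sq (t : Fin n → ℕ) (σ : Equiv.Perm (Fin n)) :
    (weylMatrix s (t ∘ σ)).det ^ 2 = (weylMatrix s t).det ^ 2 := by
  rw [show weylMatrix s (t ∘ σ) = (weylMatrix s t).submatrix σ id from rfl, Matrix.det_permute,
    mul_pow, ← Int.cast_pow, ← Units.val_pow_eq_pow_val, Int.units_sq, Units.val_one,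
    Int.cast_one, one_mul]

theorem det_weylMatrix_of_not_injective {t : Fin n → ℕ} (ht : ¬ Function.Injective t) :
    (weylMatrix s t).det = 0 := by
  obtain ⟨i, j, hij, hne⟩ := Function.not_injective_iff.mp ht
  exact Matrix.det_zero_of_row_eq hne (funext fun _ => by simp [weylMatrix, hij])

theorem sum_Tuples_Pprod_sq (hs : IsPrimitiveRoot s (2 * (2 * n + 2 * k + 1))) :
    ∑ t ∈ Tuples n k, Pprod s n t ^ 2 = (-((2 * n + 2 * k + 1 : ℕ) : ℂ)) ^ n := by
  rw [show 2 * n + 2 * k + 1 = 2 * (n + k) + 1 by ring] at hs ⊢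
  have hs0 : s ≠ 0 := hs.ne_zero (by omega)
  have horth : ∀ a b : Fin n, ∑ m ∈ Icc 1 (n + k),
      br s (2 * (m : ℤ) * ((a : ℕ) + 1)) * br s (2 * (m : ℤ) * ((b : ℕ) + 1))
        = if a = b then -((2 * (n + k) + 1 : ℕ) : ℂ) else 0 := fun a b => by
    simpa [Fin.val_inj] using sum_br_mul_br hs (a := a) (b := b) (by omega) (by omega)
  have hbox : ∑ t ∈ Fintype.piFinset (fun _ => Icc 1 (n + k)), (weylMatrix s t).det ^ 2
      = n.factorial * (-((2 * (n + k) + 1 : ℕ) : ℂ)) ^ n :=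
    sum_det_sq_of_orthogonal _ (fun (j : Fin n) (m : ℕ) => br s (2 * (m : ℤ) * ((j : ℕ) + 1)))
      _ horth
  rw [sum_piFinset_eq_factorial_mul_sum_strictAnti _ _ det_weylMatrix_comp_perm_sq
    (fun t ht => by simp [det_weylMatrix_of_not_injective ht]),
    ← Tuples_eq_filter_strictAnti, nsmul_eq_mul] at hbox
  rw [sum_congr rfl fun t _ => Pprod_sq_eq_det_sq hs0 t]
  exact mul_left_cancel₀ (Nat.cast_ne_zero.mpr n.factorial_ne_zero) hbox

end

def rho (n : ℕ) : Fin n → ℕ := fun j => n - j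

section
variable {n k : ℕ} {s : ℂ}

theorem add_rho_apply_add_val (f : Fin n → ℕ) (j : Fin n) : (f + rho n) j + j = f j + n := by
  simp only [Pi.add_apply, rho]
  omega

theorem strictAnti_add_rho_iff (f : Fin n → ℕ) : StrictAnti (f + rho n) ↔ Antitone f := by
  simp only [Fin.strictAnti_iff_antitone_add_val, add_rho_apply_add_val, Antitone,
    add_le_add_iff_right]

theorem add_rho_mem_Tuples_iff (f : Fin n → ℕ) : f + rho n ∈ Tuples n k ↔ f ∈ GammaC n k := by
  simp only [Tuples_eq_filter_strictAnti, GammaC, mem_filter, Fintype.mem_piFinset, mem_Icc,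
    strictAnti_add_rho_iff, Pi.le_def, Pi.add_apply, Pi.zero_apply, rho]
  constructor
  · rintro ⟨hbox, hanti⟩
    refine ⟨⟨fun _ => Nat.zero_le _, fun i => ?_⟩, hanti⟩
    have hfirst := (hbox ⟨0, i.pos⟩).2
    have hi := hanti (show (⟨0, i.pos⟩ : Fin n) ≤ i from Nat.zero_le _)
    simp only at hfirst
    omega
  · rintro ⟨⟨-, hle⟩, hanti⟩
    exact ⟨fun i => ⟨by omega, by have := hle i; omega⟩, hanti⟩

theorem rho_le_of_mem_Tuples {t : Fin n → ℕ} (ht : t ∈ Tuples n k) : rho n ≤ t := by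
  rw [Tuples_eq_filter_strictAnti, mem_filter, Fintype.mem_piFinset,
    Fin.strictAnti_iff_antitone_add_val] at ht
  obtain ⟨hbox, hanti⟩ := ht
  intro j
  have hj := j.isLt
  have hlast := hanti (show j ≤ ⟨n - 1, by omega⟩ from Nat.le_sub_one_of_lt hj)
  have hpos := (mem_Icc.mp (hbox ⟨n - 1, by omega⟩)).1
  simp only [rho] at hlast ⊢
  omega

theorem sum_GammaC_comp_add_rho {M : Type*} [AddCommMonoid M] (F : (Fin n → ℕ) → M) :
    ∑ f ∈ GammaC n k, F (f + rho n) = ∑ t ∈ Tuples n k, F t := by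
  refine sum_nbij' (· + rho n) (· - rho n) (fun f hf => (add_rho_mem_Tuples_iff f).mpr hf)
    (fun t ht => ?_) (fun f _ => add_tsub_cancel_right f (rho n))
    (fun t ht => tsub_add_cancel_of_le (rho_le_of_mem_Tuples ht)) fun _ _ => rfl
  rw [← add_rho_mem_Tuples_iff, tsub_add_cancel_of_le (rho_le_of_mem_Tuples ht)]
  exact ht

theorem natCast_add_rho_apply (f : Fin n → ℕ) (j : Fin n) :
    (((f + rho n) j : ℕ) : ℤ) = f j + n - j := by
  simp only [Pi.add_apply, rho]
  push_cast [Nat.cast_sub j.isLt.le]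
  ring

theorem natCast_rho_apply (j : Fin n) : ((rho n j : ℕ) : ℤ) = n - j := by
  simpa using natCast_add_rho_apply 0 j

theorem Qdim_eq (f : Fin n → ℕ) :
    Qdim s n f = (-1) ^ (∑ j, f j) * (Pprod s n (f + rho n) / Pprod s n (rho n)) := by
  rw [Qdim, Pprod, Pprod, mul_div_mul_comm, ← prod_div_distrib, ← prod_div_distrib, mul_assoc]
  congr 2
  · refine prod_congr rfl fun j _ => ?_
    rw [natCast_add_rho_apply, natCast_rho_apply]
    congr 2 <;> ring
  · refine prod_congr rfl fun p _ => ?_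
    rw [natCast_add_rho_apply, natCast_add_rho_apply, natCast_rho_apply, natCast_rho_apply]
    congr 3 <;> ring

theorem Pprod_rho_ne_zero {L : ℕ} (hs : IsPrimitiveRoot s (2 * L)) (hL : 2 * n < L) :
    Pprod s n (rho n) ≠ 0 := by
  refine mul_ne_zero (prod_ne_zero_iff.mpr fun j _ => ?_) (prod_ne_zero_iff.mpr fun p hp => ?_)
  · exact br_ne_zero hs (by rw [natCast_rho_apply]; omega) (by rw [natCast_rho_apply]; omega)
  · have hlt : (p.1 : ℕ) < p.2 := (mem_filter.mp hp).2
    simp only [natCast_rho_apply]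
    exact mul_ne_zero (br_ne_zero hs (by omega) (by omega)) (br_ne_zero hs (by omega) (by omega))

end

theorem verlinde_CB_general (n k : ℕ)
    (s : ℂ) (hs : IsPrimitiveRoot s (2 * (2 * n + 2 * k + 1)))
    (g : ℕ) :
    (∑ f ∈ GammaC n k, Qdim s n f ^ 2) ^ ((g : ℤ) - 1) *
      ∑ f ∈ GammaC n k, Qdim s n f ^ (2 * (1 - (g : ℤ))) =
    (-((2 * n + 2 * k + 1 : ℕ) : ℂ)) ^ ((n : ℤ) * ((g : ℤ) - 1)) *
      ∑ t ∈ Tuples n k, Pprod s n t ^ (2 * (1 - (g : ℤ))) := by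
  set P₀ := Pprod s n (rho n)
  have hP₀ : P₀ ^ 2 ≠ 0 := pow_ne_zero 2 (Pprod_rho_ne_zero hs (by omega))
  have hQ : ∀ f, Qdim s n f ^ 2 = Pprod s n (f + rho n) ^ 2 / P₀ ^ 2 := fun f => by
    rw [Qdim_eq, mul_pow, div_pow, ← pow_mul, mul_comm _ 2, pow_mul, neg_one_sq, one_pow, one_mul]
  have hsum_sq :
      ∑ f ∈ GammaC n k, Qdim s n f ^ 2 = (-((2 * n + 2 * k + 1 : ℕ) : ℂ)) ^ n / P₀ ^ 2 := by
    simp_rw [hQ, ← sum_div]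
    rw [sum_GammaC_comp_add_rho (fun t => Pprod s n t ^ 2), sum_Tuples_Pprod_sq hs]
  have hterm : ∀ f, Qdim s n f ^ (2 * (1 - (g : ℤ)))
      = (P₀ ^ 2) ^ ((g : ℤ) - 1) * Pprod s n (f + rho n) ^ (2 * (1 - (g : ℤ))) := fun f => by
    rw [← neg_sub, zpow_mul, zpow_mul, zpow_ofNat, zpow_ofNat, hQ, div_zpow, zpow_neg (P₀ ^ 2),
      div_inv_eq_mul, mul_comm]
  rw [hsum_sq, sum_congr rfl fun f _ => hterm f, ← mul_sum,
    sum_GammaC_comp_add_rho (fun t => Pprod s n t ^ (2 * (1 - (g : ℤ)))), div_zpow, ← mul_assoc,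
    div_mul_cancel₀ _ (zpow_ne_zero _ hP₀), zpow_mul, zpow_natCast]

/-- The genus-`g` Verlinde formula for the modularization
`C̃B^{n,k}` (`l = 2n+2k+1`, `s` a primitive `2l`-th root of unity):
`(∑_{λ∈Γ} Q(λ)²)^{g-1} ∑_{λ∈Γ} Q(λ)^{2(1-g)}
 = (-(2n+2k+1))^{n(g-1)} ∑_{n+k ≥ l_1 > … > l_n > 0}
   (∏_j [2l_j] ∏_{i<j} [l_i+l_j][l_i-l_j])^{2(1-g)}`. -/
theorem verlinde_CB (n k : ℕ) (hn : 1 ≤ n) (hk : 1 ≤ k)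
    (s : ℂ) (hs : IsPrimitiveRoot s (2 * (2 * n + 2 * k + 1)))
    (g : ℕ) (hg : 1 ≤ g) :
    (∑ f ∈ GammaC n k, Qdim s n f ^ 2) ^ ((g : ℤ) - 1) *
      ∑ f ∈ GammaC n k, Qdim s n f ^ (2 * (1 - (g : ℤ))) =
    (-((2 * n + 2 * k + 1 : ℕ) : ℂ)) ^ ((n : ℤ) * ((g : ℤ) - 1)) *
      ∑ t ∈ Tuples n k, Pprod s n t ^ (2 * (1 - (g : ℤ))) :=
  verlinde_CB_general n k s hs g
end
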